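/- Conversely, let q, r : ℝ × ℝ → ℂ be smooth, and suppose that for the AKNS pair 𝒳, 𝒯 of the Chen–Lee–Liu system (as defined above), the zero-curvature equation 𝒳_t - 𝒯_x + 𝒳𝒯 - 𝒯𝒳 = 0 holds for all x, t and for at least five distinct nonzero values of ζ ∈ ℂ. Then q and r satisfy i q_t + q_{xx} - i q q_x r = 0 and i r_t - r_{xx} - i q r r_x = 0. -/

import Mathlib

open Complex

/-- Partial derivative in the first (spatial) variable. -/
noncomputable def px (f : ℝ × ℝ → ℂ) : ℝ × ℝ → ℂ :=
  fun p => deriv (fun x => f (x, p.2)) p.1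

/-- Partial derivative in the second (time) variable. -/
noncomputable def pt (f : ℝ × ℝ → ℂ) : ℝ × ℝ → ℂ :=
  fun p => deriv (fun t => f (p.1, t)) p.2

/-- The AKNS matrix 𝒳 of the Chen–Lee–Liu system. -/
noncomputable def XM (q r : ℝ × ℝ → ℂ) (ζ : ℂ) (p : ℝ × ℝ) : Matrix (Fin 2) (Fin 2) ℂ :=
  !![-I * ζ ^ 2, ζ * q p;
     ζ * r p, I * ζ ^ 2 + (I / 2) * q p * r p]

/-- The AKNS matrix 𝒯 of the Chen–Lee–Liu system. -/
noncomputable def TM (q r : ℝ × ℝ → ℂ) (ζ : ℂ) (p : ℝ × ℝ) : Matrix (Fin 2) (Fin 2) ℂ :=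
  !![-2 * I * ζ ^ 4 - I * ζ ^ 2 * q p * r p,
     2 * ζ ^ 3 * q p + ζ * (I * px q p + (1 / 2) * (q p) ^ 2 * r p);
     2 * ζ ^ 3 * r p + ζ * (-I * px r p + (1 / 2) * q p * (r p) ^ 2),
     2 * I * ζ ^ 4 + I * ζ ^ 2 * q p * r p + (1 / 2) * (q p * px r p - px q p * r p)
       + (I / 4) * (q p) ^ 2 * (r p) ^ 2]

lemma hasDerivAt_px' (f : ℝ × ℝ → ℂ) (hf : ContDiff ℝ (⊤ : ℕ∞) f) (x t : ℝ) :
    HasDerivAt (fun x' => f (x', t)) (px f (x, t)) x := by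
  have hdiff : DifferentiableAt ℝ (fun x' => f (x', t)) x :=
    (hf.differentiable (by simp) (x, t)).comp x (differentiableAt_id.prodMk (differentiableAt_const t))
  exact hdiff.hasDerivAt

lemma hasDerivAt_pt' (f : ℝ × ℝ → ℂ) (hf : ContDiff ℝ (⊤ : ℕ∞) f) (x t : ℝ) :
    HasDerivAt (fun t' => f (x, t')) (pt f (x, t)) t := by
  have hdiff : DifferentiableAt ℝ (fun t' => f (x, t')) t :=
    (hf.differentiable (by simp) (x, t)).comp t ((differentiableAt_const x).prodMk differentiableAt_id)
  exact hdiff.hasDerivAt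

lemma contDiff_px (f : ℝ × ℝ → ℂ) (hf : ContDiff ℝ (⊤ : ℕ∞) f) : ContDiff ℝ (⊤ : ℕ∞) (px f) := by
  have h1 : ContDiff ℝ (⊤ : ℕ∞) (fun p : ℝ × ℝ => fderiv ℝ f p (1, 0)) :=
    (hf.fderiv_right (by simp)).clm_apply contDiff_const
  have h2 : px f = fun p => fderiv ℝ f p (1, 0) := by
    funext p
    have hg : HasDerivAt (fun x : ℝ => (x, p.2)) ((1 : ℝ), (0 : ℝ)) p.1 :=
      (hasDerivAt_id p.1).prodMk (hasDerivAt_const p.1 p.2)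
    have hc := ((hf.differentiable (by simp) p).hasFDerivAt).comp_hasDerivAt p.1 hg
    exact hc.deriv
  rw [h2]; exact h1

theorem stmt3 (q r : ℝ × ℝ → ℂ) (hq : ContDiff ℝ (⊤ : ℕ∞) q) (hr : ContDiff ℝ (⊤ : ℕ∞) r)
    (S : Finset ℂ) (hcard : S.card = 5) (hS0 : ∀ ζ ∈ S, ζ ≠ 0)
    (hzc : ∀ ζ ∈ S, ∀ x t : ℝ,
      (Matrix.of fun i j => deriv (fun t' => XM q r ζ (x, t') i j) t)
        - (Matrix.of fun i j => deriv (fun x' => TM q r ζ (x', t) i j) x)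
        + XM q r ζ (x, t) * TM q r ζ (x, t) - TM q r ζ (x, t) * XM q r ζ (x, t) = 0) :
    (∀ p : ℝ × ℝ, I * pt q p + px (px q) p - I * q p * px q p * r p = 0) ∧
    (∀ p : ℝ × ℝ, I * pt r p - px (px r) p - I * q p * r p * px r p = 0) := by
  obtain ⟨ζ, hζS⟩ : S.Nonempty := by
    rw [← Finset.card_pos, hcard]; norm_num
  have hζ : ζ ≠ 0 := hS0 ζ hζS
  constructor
  · rintro ⟨x, t⟩
    have h := hzc ζ hζS x t
    have h01 := congrFun (congrFun h 0) 1
    simp only [Matrix.sub_apply, Matrix.add_apply, Matrix.of_apply, Matrix.zero_apply,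
      Matrix.mul_apply, Fin.sum_univ_two, XM, TM, Matrix.cons_val', Matrix.cons_val_zero,
      Matrix.cons_val_one, Matrix.head_cons, Matrix.empty_val', Matrix.cons_val_fin_one,
      Matrix.head_fin_const] at h01
    have hQ := hasDerivAt_px' q hq x t
    have hR := hasDerivAt_px' r hr x t
    have hQx := hasDerivAt_px' (px q) (contDiff_px q hq) x t
    have hQt := (hasDerivAt_pt' q hq x t).const_mul ζ
    have hQ2 : HasDerivAt (fun x' => q (x', t) ^ 2)
        (px q (x, t) * q (x, t) + q (x, t) * px q (x, t)) x := by
      simpa only [pow_two, Pi.mul_def] using hQ.mul hQ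
    have H2 := (hQ.const_mul (2 * ζ ^ 3)).add
      (((hQx.const_mul I).add ((hQ2.const_mul (1 / 2)).mul hR)).const_mul ζ)
    simp only [Pi.add_def, Pi.mul_def] at H2
    rw [hQt.deriv, H2.deriv] at h01
    have key : ζ * (I * pt q (x, t) + px (px q) (x, t)
        - I * q (x, t) * px q (x, t) * r (x, t)) = 0 := by
      linear_combination I * h01 + (ζ * px (px q) (x, t)
        + ζ * I * q (x, t) * px q (x, t) * r (x, t) / 2
        + 2 * ζ ^ 3 * I * px q (x, t)) * Complex.I_sq
    exact (mul_eq_zero.mp key).resolve_left hζ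
  · rintro ⟨x, t⟩
    have h := hzc ζ hζS x t
    have h10 := congrFun (congrFun h 1) 0
    simp only [Matrix.sub_apply, Matrix.add_apply, Matrix.of_apply, Matrix.zero_apply,
      Matrix.mul_apply, Fin.sum_univ_two, XM, TM, Matrix.cons_val', Matrix.cons_val_zero,
      Matrix.cons_val_one, Matrix.head_cons, Matrix.empty_val', Matrix.cons_val_fin_one,
      Matrix.head_fin_const] at h10
    have hQ := hasDerivAt_px' q hq x t
    have hR := hasDerivAt_px' r hr x t
    have hRx := hasDerivAt_px' (px r) (contDiff_px r hr) x t
    have hRt := (hasDerivAt_pt' r hr x t).const_mul ζ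
    have hR2 : HasDerivAt (fun x' => r (x', t) ^ 2)
        (px r (x, t) * r (x, t) + r (x, t) * px r (x, t)) x := by
      simpa only [pow_two, Pi.mul_def] using hR.mul hR
    have H2 := (hR.const_mul (2 * ζ ^ 3)).add
      (((hRx.const_mul (-I)).add ((hQ.const_mul (1 / 2)).mul hR2)).const_mul ζ)
    simp only [Pi.add_def, Pi.mul_def] at H2
    rw [hRt.deriv, H2.deriv] at h10
    have key : ζ * (I * pt r (x, t) - px (px r) (x, t)
        - I * q (x, t) * r (x, t) * px r (x, t)) = 0 := by
      linear_combination I * h10 + (-(ζ * px (px r) (x, t))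
        + ζ * I * q (x, t) * r (x, t) * px r (x, t) / 2
        + 2 * ζ ^ 3 * I * px r (x, t)) * Complex.I_sq
    exact (mul_eq_zero.mp key).resolve_left hζ
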